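/- arXiv:2010.02148 — 3 statements merged into one kernel-verified Lean document; each statement's English description precedes it below -/
import Mathlib

section
/- Consider a single edge with transit time τ > 0 and capacity ν > 0 over the time horizon [0, H). Let (f⁺, f⁻) and (f̂⁺, f̂⁻) be two pairs of Lebesgue-integrable rate functions [0, H) → ℝ≥0 with cumulative flows F⁺(θ) = ∫₀^θ f⁺, F⁻(θ) = ∫₀^θ f⁻ (and likewise F̂⁺, F̂⁻), each pair satisfying the deterministic queuing dynamics: F⁺(θ) ≥ F⁻(θ + τ) for all θ ∈ [0, H − τ), and, with queue length z(θ) := F⁺(θ) − F⁻(θ + τ), the outflow satisfies f⁻(θ + τ) = ν if z(θ) > 0 and f⁻(θ + τ) = min{f⁺(θ), ν} if z(θ) = 0, for almost all θ ∈ [0, H − τ); moreover f⁻(θ) = 0 for θ < τ. If F⁺(θ) ≥ F̂⁺(θ) for all θ ∈ [0, H), then F⁻(θ) ≥ F̂⁻(θ) for all θ ∈ [0, H). -/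
open MeasureTheory

/-- Monotone dependence of the cumulative outflow on the cumulative inflow
for a single edge with transit time `τ > 0` and capacity `ν > 0` under the deterministic
queuing dynamics on the time horizon `[0, H)`.  Here `(fp, fm)` and `(gp, gm)` are two
pairs of inflow/outflow rate functions with cumulative flows `Fp, Fm, Gp, Gm`.  If the first
cumulative inflow dominates the second everywhere on `[0, H)`, then so does the first
cumulative outflow. -/
theorem cumulative_outflow_monotone_in_inflow
    (τ ν H : ℝ) (hτ : 0 < τ) (hν : 0 < ν) (hH : 0 < H)
    (fp fm gp gm Fp Fm Gp Gm : ℝ → ℝ)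
    -- cumulative flows
    (hFp : ∀ θ, Fp θ = ∫ t in (0:ℝ)..θ, fp t)
    (hFm : ∀ θ, Fm θ = ∫ t in (0:ℝ)..θ, fm t)
    (hGp : ∀ θ, Gp θ = ∫ t in (0:ℝ)..θ, gp t)
    (hGm : ∀ θ, Gm θ = ∫ t in (0:ℝ)..θ, gm t)
    -- the rates are nonnegative on [0, H)
    (hfp_nonneg : ∀ θ ∈ Set.Ico (0:ℝ) H, 0 ≤ fp θ)
    (hfm_nonneg : ∀ θ ∈ Set.Ico (0:ℝ) H, 0 ≤ fm θ)
    (hgp_nonneg : ∀ θ ∈ Set.Ico (0:ℝ) H, 0 ≤ gp θ)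
    (hgm_nonneg : ∀ θ ∈ Set.Ico (0:ℝ) H, 0 ≤ gm θ)
    -- the rates are Lebesgue-integrable on [0, H)
    (hfp_int : IntegrableOn fp (Set.Ico 0 H))
    (hfm_int : IntegrableOn fm (Set.Ico 0 H))
    (hgp_int : IntegrableOn gp (Set.Ico 0 H))
    (hgm_int : IntegrableOn gm (Set.Ico 0 H))
    -- no outflow before the transit time has elapsed
    (hfm_zero : ∀ θ ∈ Set.Ico (0:ℝ) H, θ < τ → fm θ = 0)
    (hgm_zero : ∀ θ ∈ Set.Ico (0:ℝ) H, θ < τ → gm θ = 0)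
    -- non-deficit constraints
    (hf_nondef : ∀ θ ∈ Set.Ico (0:ℝ) (H - τ), Fm (θ + τ) ≤ Fp θ)
    (hg_nondef : ∀ θ ∈ Set.Ico (0:ℝ) (H - τ), Gm (θ + τ) ≤ Gp θ)
    -- deterministic queuing dynamics, for almost all θ ∈ [0, H − τ)
    (hf_queue : ∀ᵐ θ ∂volume, θ ∈ Set.Ico (0:ℝ) (H - τ) →
      (0 < Fp θ - Fm (θ + τ) → fm (θ + τ) = ν) ∧
      (Fp θ - Fm (θ + τ) = 0 → fm (θ + τ) = min (fp θ) ν))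
    (hg_queue : ∀ᵐ θ ∂volume, θ ∈ Set.Ico (0:ℝ) (H - τ) →
      (0 < Gp θ - Gm (θ + τ) → gm (θ + τ) = ν) ∧
      (Gp θ - Gm (θ + τ) = 0 → gm (θ + τ) = min (gp θ) ν))
    -- domination of cumulative inflows
    (hdom : ∀ θ ∈ Set.Ico (0:ℝ) H, Gp θ ≤ Fp θ) :
    ∀ θ ∈ Set.Ico (0:ℝ) H, Gm θ ≤ Fm θ := by
  intro θ₀ hθ₀
  obtain ⟨hθ₀0, hθ₀H⟩ := hθ₀
  by_contra hlt
  push_neg at hlt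
  have hEθ₀ : Fm θ₀ - Gm θ₀ < 0 := sub_neg.mpr hlt
  -- interval integrability
  have hIccsub : Set.Icc 0 θ₀ ⊆ Set.Ico 0 H := fun x hx => ⟨hx.1, lt_of_le_of_lt hx.2 hθ₀H⟩
  have hfmI : IntervalIntegrable fm volume 0 θ₀ :=
    (hfm_int.mono_set (by rw [Set.uIcc_of_le hθ₀0]; exact hIccsub)).intervalIntegrable
  have hgmI : IntervalIntegrable gm volume 0 θ₀ :=
    (hgm_int.mono_set (by rw [Set.uIcc_of_le hθ₀0]; exact hIccsub)).intervalIntegrable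
  -- E is continuous on [0, θ₀]
  have hFmc : ContinuousOn Fm (Set.Icc 0 θ₀) := by
    have := intervalIntegral.continuousOn_primitive_interval
      (f := fm) (μ := volume) (a := (0:ℝ)) (b := θ₀)
      (by rw [Set.uIcc_of_le hθ₀0]; exact hfm_int.mono_set hIccsub)
    rw [Set.uIcc_of_le hθ₀0] at this
    exact this.congr fun x _ => hFm x
  have hGmc : ContinuousOn Gm (Set.Icc 0 θ₀) := by
    have := intervalIntegral.continuousOn_primitive_interval
      (f := gm) (μ := volume) (a := (0:ℝ)) (b := θ₀)
      (by rw [Set.uIcc_of_le hθ₀0]; exact hgm_int.mono_set hIccsub)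
    rw [Set.uIcc_of_le hθ₀0] at this
    exact this.congr fun x _ => hGm x
  have hEc : ContinuousOn (fun t => Fm t - Gm t) (Set.Icc 0 θ₀) := hFmc.sub hGmc
  -- E vanishes on [0, min τ θ₀] ∩ [0,H)
  have hEzero : ∀ t, 0 ≤ t → t ≤ τ → t < H → Fm t - Gm t = 0 := by
    intro t ht0 htτ htH
    have hnull : ∀ h : ℝ → ℝ, (∀ θ ∈ Set.Ico (0:ℝ) H, θ < τ → h θ = 0) →
        (∫ s in (0:ℝ)..t, h s) = 0 := by
      intro h hz
      rw [intervalIntegral.integral_of_le ht0]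
      have hne : ∀ᵐ u ∂volume, u ≠ τ := by
        rw [ae_iff]
        simpa using Real.volume_singleton (a := τ)
      have hz' : ∫ u in Set.Ioc (0:ℝ) t, h u = ∫ u in Set.Ioc (0:ℝ) t, (0:ℝ) := by
        apply setIntegral_congr_ae measurableSet_Ioc
        filter_upwards [hne] with u hune hu
        have huH : u < H := lt_of_le_of_lt hu.2 htH
        have huτ : u < τ := lt_of_le_of_ne (hu.2.trans htτ) hune
        exact hz u ⟨hu.1.le, huH⟩ huτ
      simpa using hz'
    rw [hFm, hGm, hnull fm hfm_zero, hnull gm hgm_zero, sub_zero]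
  -- the set where E ≥ 0
  set S : Set ℝ := {t | t ∈ Set.Icc (0:ℝ) θ₀ ∧ 0 ≤ Fm t - Gm t} with hSdef
  have hS0 : (0:ℝ) ∈ S :=
    ⟨⟨le_refl 0, hθ₀0⟩, le_of_eq (hEzero 0 le_rfl hτ.le hH).symm⟩
  have hSne : S.Nonempty := ⟨0, hS0⟩
  have hSbdd : BddAbove S := ⟨θ₀, fun x hx => hx.1.2⟩
  have hSclosed : IsClosed S := by
    have : S = Set.Icc 0 θ₀ ∩ (fun t => Fm t - Gm t) ⁻¹' Set.Ici 0 := by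
      ext x
      simp only [hSdef, Set.mem_setOf_eq, Set.mem_inter_iff, Set.mem_preimage, Set.mem_Ici]
    rw [this]
    exact hEc.preimage_isClosed_of_isClosed isClosed_Icc isClosed_Ici
  set s := sSup S with hsdef
  have hsS : s ∈ S := hSclosed.csSup_mem hSne hSbdd
  have hs0 : 0 ≤ s := hsS.1.1
  have hsθ₀ : s ≤ θ₀ := hsS.1.2
  have hEs : 0 ≤ Fm s - Gm s := hsS.2
  -- beyond s, E is negative
  have hEneg : ∀ t, s < t → t ≤ θ₀ → Fm t - Gm t < 0 := by
    intro t hst htθ₀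
    by_contra hc
    push_neg at hc
    exact absurd (le_csSup hSbdd ⟨⟨hs0.trans hst.le, htθ₀⟩, hc⟩) (not_le.mpr hst)
  have hsθ₀' : s < θ₀ := by
    rcases lt_or_eq_of_le hsθ₀ with h | h
    · exact h
    · rw [h] at hEs
      exact absurd hEs (not_le.mpr hEθ₀)
  -- s ≥ τ : all points below min τ θ₀ are in S
  have hτs : τ ≤ s := by
    by_contra hc
    push_neg at hc
    rcases le_or_gt θ₀ τ with hcase | hcase
    · -- then θ₀ ≤ τ and E θ₀ = 0, contradiction
      exact absurd (hEzero θ₀ hθ₀0 hcase hθ₀H) (ne_of_lt hEθ₀)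
    · -- pick t between s and τ
      have hst : s < min τ θ₀ := lt_min hc hsθ₀'
      have h1 : Fm (min τ θ₀) - Gm (min τ θ₀) < 0 := hEneg _ hst (min_le_right _ _)
      have h2 : Fm (min τ θ₀) - Gm (min τ θ₀) = 0 :=
        hEzero _ (le_trans hs0 hst.le) (min_le_left _ _)
          (lt_of_le_of_lt (min_le_right _ _) hθ₀H)
      exact absurd h2 (ne_of_lt h1)
  -- On (s, θ₀], a.e. we have gm ≤ fm
  have hshift : ∀ᵐ t ∂volume,
      (t + -τ ∈ Set.Ico (0:ℝ) (H - τ) →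
        (0 < Fp (t + -τ) - Fm (t + -τ + τ) → fm (t + -τ + τ) = ν) ∧
        (Fp (t + -τ) - Fm (t + -τ + τ) = 0 → fm (t + -τ + τ) = min (fp (t + -τ)) ν)) ∧
      (t + -τ ∈ Set.Ico (0:ℝ) (H - τ) →
        (0 < Gp (t + -τ) - Gm (t + -τ + τ) → gm (t + -τ + τ) = ν) ∧
        (Gp (t + -τ) - Gm (t + -τ + τ) = 0 → gm (t + -τ + τ) = min (gp (t + -τ)) ν)) := by
    have hmp : MeasurePreserving (fun x : ℝ => x + -τ) volume volume :=
      measurePreserving_add_right volume (-τ)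
    exact hmp.quasiMeasurePreserving.tendsto_ae.eventually (hf_queue.and hg_queue)
  have hae : ∀ᵐ t ∂volume, t ∈ Set.Ioc s θ₀ → gm t ≤ fm t := by
    filter_upwards [hshift] with t ht htmem
    have htτ : τ ≤ t := le_trans hτs htmem.1.le
    have hθmem : t + -τ ∈ Set.Ico (0:ℝ) (H - τ) := by
      constructor
      · linarith
      · have : t < H := lt_of_le_of_lt htmem.2 hθ₀H
        linarith
    have hts : t + -τ + τ = t := by ring
    obtain ⟨hft, hgt⟩ := ht
    obtain ⟨hf1, _⟩ := hft hθmem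
    obtain ⟨hg1, hg2⟩ := hgt hθmem
    rw [hts] at hf1 hg1 hg2
    -- E t < 0, so Fm t < Gm t ≤ Gp (t-τ) ≤ Fp (t-τ)
    have hEt : Fm t - Gm t < 0 := hEneg t htmem.1 htmem.2
    have hGmGp : Gm t ≤ Gp (t + -τ) := by
      have := hg_nondef (t + -τ) hθmem
      rwa [hts] at this
    have hGpFp : Gp (t + -τ) ≤ Fp (t + -τ) := by
      apply hdom
      exact ⟨hθmem.1, by have := hθmem.2; linarith⟩
    have hfm : fm t = ν := hf1 (by linarith)
    have hgm : gm t ≤ ν := by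
      rcases lt_or_eq_of_le (by linarith : (0:ℝ) ≤ Gp (t + -τ) - Gm t) with h | h
      · exact le_of_eq (hg1 h)
      · rw [hg2 h.symm]; exact min_le_right _ _
    rw [hfm]
    exact hgm
  -- integrate over [s, θ₀]
  have hfmI' : IntervalIntegrable fm volume s θ₀ :=
    hfmI.mono_set (by rw [Set.uIcc_of_le hsθ₀, Set.uIcc_of_le hθ₀0]; exact Set.Icc_subset_Icc hs0 le_rfl)
  have hgmI' : IntervalIntegrable gm volume s θ₀ :=
    hgmI.mono_set (by rw [Set.uIcc_of_le hsθ₀, Set.uIcc_of_le hθ₀0]; exact Set.Icc_subset_Icc hs0 le_rfl)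
  have hfm0s : IntervalIntegrable fm volume 0 s :=
    hfmI.mono_set (by rw [Set.uIcc_of_le hs0, Set.uIcc_of_le hθ₀0]; exact Set.Icc_subset_Icc le_rfl hsθ₀)
  have hgm0s : IntervalIntegrable gm volume 0 s :=
    hgmI.mono_set (by rw [Set.uIcc_of_le hs0, Set.uIcc_of_le hθ₀0]; exact Set.Icc_subset_Icc le_rfl hsθ₀)
  have hmono : (∫ t in s..θ₀, gm t) ≤ ∫ t in s..θ₀, fm t := by
    have hne : ∀ᵐ u ∂volume, u ≠ s := by
      rw [ae_iff]
      simpa using Real.volume_singleton (a := s)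
    have h1 : ∀ᵐ t ∂volume.restrict (Set.Icc s θ₀), gm t ≤ fm t := by
      rw [ae_restrict_iff' measurableSet_Icc]
      filter_upwards [hae, hne] with t h1 h2 ht
      exact h1 ⟨lt_of_le_of_ne ht.1 (Ne.symm h2), ht.2⟩
    exact intervalIntegral.integral_mono_ae_restrict hsθ₀ hgmI' hfmI' h1
  have hFmsplit : Fm θ₀ - Fm s = ∫ t in s..θ₀, fm t := by
    rw [hFm, hFm]
    exact intervalIntegral.integral_interval_sub_left hfmI hfm0s
  have hGmsplit : Gm θ₀ - Gm s = ∫ t in s..θ₀, gm t := by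
    rw [hGm, hGm]
    exact intervalIntegral.integral_interval_sub_left hgmI hgm0s
  have : 0 ≤ Fm θ₀ - Gm θ₀ := by
    have : Fm θ₀ - Gm θ₀ = (Fm s - Gm s) + ((∫ t in s..θ₀, fm t) - ∫ t in s..θ₀, gm t) := by
      rw [← hFmsplit, ← hGmsplit]; ring
    rw [this]
    have := sub_nonneg.mpr hmono
    linarith
  exact absurd this (not_le.mpr hEθ₀)
end

section
/- Consider a parallel-edge network with finite nonempty edge set E, each edge e from s to t with transit time 0 < τ_e < H and capacity ν_e > 0, a finite player set P with supply rates d_j > 0 and ∑_{j∈P} d_j ≥ ∑_{e∈E} ν_e, and time horizon H > 0. Then the value of a maximum flow over time equals ∑_{e∈E} ν_e · (H − τ_e); that is, every feasible flow over time f satisfies ∑_{j∈P} ρ_j(f) ≤ ∑_{e∈E} ν_e (H − τ_e), and there exists a feasible flow over time attaining equality (namely the one in which each player routes inflow proportionally to capacities, f⁺_{e,j}(θ) = d_j · ν_e / ∑_{e'∈E} ν_{e'} for all θ ∈ [0, H)). -/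
/-!
Each edge `e` releases nothing before `τ_e`, and by the queueing condition never more than
`ν_e` per unit time; integrating over `[0, H)` bounds its total outflow by `ν_e (H − τ_e)`.
When the supply covers the total capacity, the proportional inflow `d_j ν_e / ∑ ν` pushes at
least `ν_e` into every edge, so every edge discharges at full capacity from `τ_e` on, each
player receiving her share of the inflow; this flow meets the bound.
-/

open MeasureTheory

/-- A flow over time on a parallel-edge network with edge set `E` (edges from `s` to `t`,
with transit times `τ` and capacities `ν`), player set `P` with supply rates `d`, and time
horizon `H`: a family of nonnegative Lebesgue-integrable in- and outflow rate functions
(extended by `0` outside the time horizon) satisfying flow conservation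
`∑ e, f⁺ e j θ = d j`. -/
structure FlowOverTime (E P : Type) [Fintype E] [Fintype P]
    (τ ν : E → ℝ) (d : P → ℝ) (H : ℝ) where
  /-- inflow rates `f⁺_{e,j}` -/
  fin : E → P → ℝ → ℝ
  /-- outflow rates `f⁻_{e,j}` -/
  fout : E → P → ℝ → ℝ
  fin_nonneg : ∀ e j θ, 0 ≤ fin e j θ
  fout_nonneg : ∀ e j θ, 0 ≤ fout e j θ
  fin_supp : ∀ e j θ, θ ∉ Set.Ico (0 : ℝ) H → fin e j θ = 0
  fout_supp : ∀ e j θ, θ ∉ Set.Ico (τ e) H → fout e j θ = 0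
  fin_integrable : ∀ e j, Integrable (fin e j)
  fout_integrable : ∀ e j, Integrable (fout e j)
  conservation : ∀ j θ, θ ∈ Set.Ico (0 : ℝ) H → ∑ e, fin e j θ = d j

namespace FlowOverTime

variable {E P : Type} [Fintype E] [Fintype P] {τ ν : E → ℝ} {d : P → ℝ} {H : ℝ}

/-- Cumulative inflow `F⁺_{e,j}(θ) = ∫₀^θ f⁺_{e,j}`. -/
noncomputable def Fplus (f : FlowOverTime E P τ ν d H) (e : E) (j : P) (θ : ℝ) : ℝ :=
  ∫ t in (0:ℝ)..θ, f.fin e j t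

/-- Cumulative outflow `F⁻_{e,j}(θ) = ∫₀^θ f⁻_{e,j}`. -/
noncomputable def Fminus (f : FlowOverTime E P τ ν d H) (e : E) (j : P) (θ : ℝ) : ℝ :=
  ∫ t in (0:ℝ)..θ, f.fout e j t

/-- Queue length `z_e(θ) = ∑_j F⁺_{e,j}(θ) − ∑_j F⁻_{e,j}(θ + τ_e)`. -/
noncomputable def queue (f : FlowOverTime E P τ ν d H) (e : E) (θ : ℝ) : ℝ :=
  ∑ j, f.Fplus e j θ - ∑ j, f.Fminus e j (θ + τ e)

/-- Exit time `T_e(θ) = θ + z_e(θ)/ν_e + τ_e`. -/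
noncomputable def exitTime (f : FlowOverTime E P τ ν d H) (e : E) (θ : ℝ) : ℝ :=
  θ + f.queue e θ / ν e + τ e

open Classical in
/-- Feasibility of a flow over time: non-deficit constraints, the deterministic queuing
condition (edges operate at capacity while the queue is nonempty), and fair merging of
the players' flows (a player's share of the outflow at time `θ` equals her share of the
inflow at time `φ = max T_e⁻¹(θ)`). -/
def Feasible (f : FlowOverTime E P τ ν d H) : Prop :=
  (∀ e j θ, θ ∈ Set.Ico (0:ℝ) (H - τ e) → f.Fminus e j (θ + τ e) ≤ f.Fplus e j θ) ∧
  (∀ e θ, θ ∈ Set.Ico (0:ℝ) (H - τ e) →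
      ∑ j, f.fout e j (θ + τ e) =
        if 0 < f.queue e θ then ν e else min (∑ j, f.fin e j θ) (ν e)) ∧
  (∀ e j θ, θ ∈ Set.Ico (0:ℝ) H → ∀ φ : ℝ,
      IsGreatest {ϑ : ℝ | ϑ ∈ Set.Ico (0:ℝ) H ∧ f.exitTime e ϑ = θ} φ →
      f.fout e j θ =
        if 0 < ∑ j', f.fin e j' φ
        then (f.fin e j φ / ∑ j', f.fin e j' φ) * ∑ j', f.fout e j' θ
        else 0)

/-- Payoff of player `j`: the amount `∑_e F⁻_{e,j}(H)` of her flow arriving at `t`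
before time `H`. -/
noncomputable def payoff (f : FlowOverTime E P τ ν d H) (j : P) : ℝ :=
  ∑ e, f.Fminus e j H

end FlowOverTime

open Set

lemma integral_indicator_Ico_const {a b H : ℝ} (c : ℝ) (ha : 0 ≤ a) (hab : a ≤ b)
    (hbH : b ≤ H) :
    ∫ t in (0:ℝ)..b, (Ico a H).indicator (fun _ => c) t = c * (b - a) := by
  rw [intervalIntegral.integral_of_le (ha.trans hab), setIntegral_indicator measurableSet_Ico,
    setIntegral_const]
  have hvol : volume (Ioc 0 b ∩ Ico a H) = ENNReal.ofReal (b - a) := by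
    refine le_antisymm ?_ ?_
    · calc volume (Ioc 0 b ∩ Ico a H) ≤ volume (Icc a b) :=
            measure_mono fun x hx => ⟨hx.2.1, hx.1.2⟩
        _ = ENNReal.ofReal (b - a) := Real.volume_Icc
    · calc ENNReal.ofReal (b - a) = volume (Ioo a b) := Real.volume_Ioo.symm
        _ ≤ volume (Ioc 0 b ∩ Ico a H) :=
            measure_mono fun x hx =>
              ⟨⟨ha.trans_lt hx.1, hx.2.le⟩, hx.1.le, hx.2.trans_le hbH⟩
  rw [measureReal_def, hvol, ENNReal.toReal_ofReal (sub_nonneg.2 hab), smul_eq_mul, mul_comm]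

lemma integrable_indicator_Ico_const (a b c : ℝ) :
    Integrable ((Ico a b).indicator fun _ => c) :=
  (integrableOn_const measure_Ico_lt_top.ne).integrable_indicator measurableSet_Ico

namespace FlowOverTime

variable {E P : Type} [Fintype E] [Fintype P] {τ ν : E → ℝ} {d : P → ℝ} {H : ℝ}

lemma sum_payoff_eq_sum_Fminus (f : FlowOverTime E P τ ν d H) :
    ∑ j, f.payoff j = ∑ e, ∑ j, f.Fminus e j H :=
  Finset.sum_comm

lemma sum_Fminus_eq_integral (f : FlowOverTime E P τ ν d H) (e : E) (θ : ℝ) :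
    ∑ j, f.Fminus e j θ = ∫ t in (0:ℝ)..θ, ∑ j, f.fout e j t :=
  (intervalIntegral.integral_finsetSum fun j _ =>
    (f.fout_integrable e j).intervalIntegrable).symm

lemma sum_fout_le_indicator {f : FlowOverTime E P τ ν d H} (hf : f.Feasible) (e : E) (t : ℝ) :
    ∑ j, f.fout e j t ≤ (Ico (τ e) H).indicator (fun _ => ν e) t := by
  by_cases ht : t ∈ Ico (τ e) H
  · have hqueue := hf.2.1 e (t - τ e) ⟨sub_nonneg.2 ht.1, by linarith [ht.2]⟩
    rw [sub_add_cancel] at hqueue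
    rw [indicator_of_mem ht, hqueue]
    split_ifs
    exacts [le_rfl, min_le_right _ _]
  · simp [indicator_of_notMem ht, f.fout_supp e _ t ht]

lemma sum_Fminus_le {f : FlowOverTime E P τ ν d H} (hf : f.Feasible) {e : E}
    (hτ : 0 ≤ τ e) (hτH : τ e ≤ H) :
    ∑ j, f.Fminus e j H ≤ ν e * (H - τ e) := by
  rw [sum_Fminus_eq_integral, ← integral_indicator_Ico_const (ν e) hτ hτH le_rfl]
  exact intervalIntegral.integral_mono (hτ.trans hτH)
    (integrable_finsetSum _ fun j _ => f.fout_integrable e j).intervalIntegrable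
    (integrable_indicator_Ico_const _ _ _).intervalIntegrable (sum_fout_le_indicator hf e)

theorem sum_payoff_le {f : FlowOverTime E P τ ν d H} (hf : f.Feasible)
    (hτ : ∀ e, 0 ≤ τ e) (hτH : ∀ e, τ e ≤ H) :
    ∑ j, f.payoff j ≤ ∑ e, ν e * (H - τ e) := by
  rw [sum_payoff_eq_sum_Fminus]
  exact Finset.sum_le_sum fun e _ => sum_Fminus_le hf (hτ e) (hτH e)

noncomputable def ofConstInflow (a : E → P → ℝ) (ha : ∀ e j, 0 ≤ a e j)
    (hν : ∀ e, 0 ≤ ν e) (hcons : ∀ j, ∑ e, a e j = d j) : FlowOverTime E P τ ν d H where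
  fin e j := (Ico 0 H).indicator fun _ => a e j
  fout e j t := (a e j / ∑ j', a e j') * (Ico (τ e) H).indicator (fun _ => ν e) t
  fin_nonneg e j := indicator_nonneg fun _ _ => ha e j
  fout_nonneg e j _ := mul_nonneg (div_nonneg (ha e j) (Finset.sum_nonneg fun j' _ => ha e j'))
    (indicator_nonneg (fun _ _ => hν e) _)
  fin_supp e j _ ht := indicator_of_notMem ht _
  fout_supp e j _ ht := by rw [indicator_of_notMem ht, mul_zero]
  fin_integrable e j := integrable_indicator_Ico_const _ _ _
  fout_integrable e j := (integrable_indicator_Ico_const _ _ _).const_mul _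
  conservation j _ ht := by simp only [indicator_of_mem ht, hcons]

section ofConstInflow

variable {a : E → P → ℝ} {ha : ∀ e j, 0 ≤ a e j} {hν : ∀ e, 0 ≤ ν e}
  {hcons : ∀ j, ∑ e, a e j = d j}

lemma sum_fin_ofConstInflow (e : E) {θ : ℝ} (hθ : θ ∈ Ico 0 H) :
    ∑ j, (ofConstInflow a ha hν hcons : FlowOverTime E P τ ν d H).fin e j θ =
      ∑ j, a e j := by
  simp only [ofConstInflow, indicator_of_mem hθ]

lemma sum_fout_ofConstInflow {e : E} (hcap : ν e ≤ ∑ j, a e j) (t : ℝ) :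
    ∑ j, (ofConstInflow a ha hν hcons : FlowOverTime E P τ ν d H).fout e j t =
      (Ico (τ e) H).indicator (fun _ => ν e) t := by
  simp only [ofConstInflow]
  by_cases hA : ∑ j, a e j = 0
  · -- the shares are the junk value `0` here, but then also `ν e = 0`
    have hνe : ν e = 0 := le_antisymm (hcap.trans hA.le) (hν e)
    simp [hA, hνe]
  · rw [← Finset.sum_mul, ← Finset.sum_div, div_self hA, one_mul]

lemma Fplus_ofConstInflow (e : E) (j : P) {θ : ℝ} (hθ : 0 ≤ θ) (hθH : θ ≤ H) :
    (ofConstInflow a ha hν hcons : FlowOverTime E P τ ν d H).Fplus e j θ = a e j * θ := by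
  simpa only [Fplus, ofConstInflow, sub_zero] using
    integral_indicator_Ico_const (a e j) le_rfl hθ hθH

lemma Fminus_ofConstInflow (e : E) (j : P) {θ : ℝ} (hτ : 0 ≤ τ e) (hτθ : τ e ≤ θ)
    (hθH : θ ≤ H) :
    (ofConstInflow a ha hν hcons : FlowOverTime E P τ ν d H).Fminus e j θ =
      (a e j / ∑ j', a e j') * (ν e * (θ - τ e)) := by
  simp only [Fminus, ofConstInflow, intervalIntegral.integral_const_mul,
    integral_indicator_Ico_const (ν e) hτ hτθ hθH]

theorem feasible_ofConstInflow (hτ : ∀ e, 0 ≤ τ e) (hcap : ∀ e, ν e ≤ ∑ j, a e j) :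
    (ofConstInflow a ha hν hcons : FlowOverTime E P τ ν d H).Feasible := by
  refine ⟨fun e j θ hθ => ?_, fun e θ hθ => ?_, fun e j θ _ φ hφ => ?_⟩
  · have hθH : θ ≤ H := by linarith [hθ.2, hτ e]
    rw [Fminus_ofConstInflow e j (hτ e) (by linarith [hθ.1]) (by linarith [hθ.2]),
      Fplus_ofConstInflow e j hθ.1 hθH, add_sub_cancel_right, ← mul_assoc]
    refine mul_le_mul_of_nonneg_right ?_ hθ.1
    rcases (Finset.sum_nonneg fun j' _ => ha e j').eq_or_lt with hA | hA
    · rw [← hA, div_zero, zero_mul]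
      exact ha e j
    · rw [div_mul_eq_mul_div, div_le_iff₀ hA]
      exact mul_le_mul_of_nonneg_left (hcap e) (ha e j)
  · have hθ₀ : θ ∈ Ico 0 H := ⟨hθ.1, by linarith [hθ.2, hτ e]⟩
    rw [sum_fout_ofConstInflow (hcap e), indicator_of_mem
      (show θ + τ e ∈ Ico (τ e) H from ⟨by linarith [hθ.1], by linarith [hθ.2]⟩),
      sum_fin_ofConstInflow e hθ₀, min_eq_right (hcap e), ite_self]
  · rw [sum_fin_ofConstInflow e hφ.1.1, sum_fout_ofConstInflow (hcap e)]
    simp only [ofConstInflow, indicator_of_mem hφ.1.1]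
    split_ifs with hA
    · rfl
    · rw [le_antisymm (not_lt.1 hA) (Finset.sum_nonneg fun j' _ => ha e j'), div_zero, zero_mul]

theorem sum_payoff_ofConstInflow (hτ : ∀ e, 0 ≤ τ e) (hτH : ∀ e, τ e ≤ H)
    (hcap : ∀ e, ν e ≤ ∑ j, a e j) :
    ∑ j, (ofConstInflow a ha hν hcons : FlowOverTime E P τ ν d H).payoff j =
      ∑ e, ν e * (H - τ e) := by
  rw [sum_payoff_eq_sum_Fminus]
  refine Finset.sum_congr rfl fun e _ => ?_
  simp only [sum_Fminus_eq_integral, sum_fout_ofConstInflow (hcap e),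
    integral_indicator_Ico_const (ν e) (hτ e) (hτH e) le_rfl]

end ofConstInflow

end FlowOverTime

theorem max_flow_value_supply_ge_capacity_general
    {E P : Type} [Fintype E] [Fintype P] [Nonempty E]
    (τ ν : E → ℝ) (d : P → ℝ) (H : ℝ)
    (hτ : ∀ e, 0 < τ e) (hτH : ∀ e, τ e < H) (hν : ∀ e, 0 < ν e)
    (hd : ∀ j, 0 < d j)
    (hsupply : ∑ e, ν e ≤ ∑ j, d j) :
    (∀ f : FlowOverTime E P τ ν d H, f.Feasible →
        ∑ j, f.payoff j ≤ ∑ e, ν e * (H - τ e)) ∧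
    (∃ f : FlowOverTime E P τ ν d H, f.Feasible ∧
        (∀ e j θ, θ ∈ Set.Ico (0:ℝ) H → f.fin e j θ = d j * ν e / ∑ e', ν e') ∧
        ∑ j, f.payoff j = ∑ e, ν e * (H - τ e)) := by
  have hS : 0 < ∑ e, ν e := Finset.sum_pos (fun e _ => hν e) Finset.univ_nonempty
  have hτ₀ e : 0 ≤ τ e := (hτ e).le
  have hτH' e : τ e ≤ H := (hτH e).le
  let a e j := d j * ν e / ∑ e', ν e'
  have hcons j : ∑ e, a e j = d j := by
    rw [← Finset.sum_div, ← Finset.mul_sum, mul_div_assoc, div_self hS.ne', mul_one]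
  have hcap e : ν e ≤ ∑ j, a e j := by
    rw [← Finset.sum_div, ← Finset.sum_mul, le_div_iff₀ hS, mul_comm]
    exact mul_le_mul_of_nonneg_right hsupply (hν e).le
  let f : FlowOverTime E P τ ν d H :=
    FlowOverTime.ofConstInflow a (fun e j => div_nonneg (mul_nonneg (hd j).le (hν e).le) hS.le)
      (fun e => (hν e).le) hcons
  exact ⟨fun f hf => FlowOverTime.sum_payoff_le hf hτ₀ hτH',
    f, FlowOverTime.feasible_ofConstInflow hτ₀ hcap,
    fun e j θ hθ => indicator_of_mem hθ fun _ => a e j,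
    FlowOverTime.sum_payoff_ofConstInflow hτ₀ hτH' hcap⟩

/-- On a parallel-edge network with `0 < τ_e < H`, capacities `ν_e > 0`,
supply rates `d_j > 0` with `∑_j d_j ≥ ∑_e ν_e`, and time horizon `H > 0`, the value of a
maximum flow over time equals `∑_e ν_e (H − τ_e)`: every feasible flow over time has total
payoff at most this value, and the feasible flow over time in which every player routes
her inflow proportionally to the capacities attains it. -/
theorem max_flow_value_supply_ge_capacity
    {E P : Type} [Fintype E] [Fintype P] [Nonempty E]
    (τ ν : E → ℝ) (d : P → ℝ) (H : ℝ)
    (hτ : ∀ e, 0 < τ e) (hτH : ∀ e, τ e < H) (hν : ∀ e, 0 < ν e)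
    (hd : ∀ j, 0 < d j) (hH : 0 < H)
    (hsupply : ∑ e, ν e ≤ ∑ j, d j) :
    (∀ f : FlowOverTime E P τ ν d H, f.Feasible →
        ∑ j, f.payoff j ≤ ∑ e, ν e * (H - τ e)) ∧
    (∃ f : FlowOverTime E P τ ν d H, f.Feasible ∧
        (∀ e j θ, θ ∈ Set.Ico (0:ℝ) H → f.fin e j θ = d j * ν e / ∑ e', ν e') ∧
        ∑ j, f.payoff j = ∑ e, ν e * (H - τ e)) :=
  max_flow_value_supply_ge_capacity_general τ ν d H hτ hτH hν hd hsupply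
end

section
/- Consider a parallel-edge network with finite nonempty edge set E, each edge e from s to t with transit time τ_e > 0 and capacity ν_e > 0, a finite player set P with supply rates d_j > 0, and time horizon H > 0, where players receive the information (θ, T(θ)) consisting of the current time and current exit times. Let every player use the strategy ḡ given by: ḡ_{e,j}(θ, T) = ν_e / ∑_{e'∈E'(T)} ν_{e'} if e ∈ E'(T); ḡ_{e,j}(θ, T) = 0 if E'(T) ≠ ∅ and e ∉ E'(T); and ḡ_{e,j}(θ, T) = ν_e / ∑_{e'∈E} ν_{e'} if E'(T) = ∅, where E'(T) = {e ∈ E : T_e < H}. Then in the feasible flow over time induced by this strategy profile, the sum of the players' payoffs equals the system optimum: ∑_{j∈P} ρ_j = Opt. -/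
open MeasureTheory

open Classical in
/-- The set of active edges `E'(T) = {e ∈ E : T_e < H}` for a vector of exit times `T`. -/
noncomputable def activeEdges {E : Type} [Fintype E] (H : ℝ) (T : E → ℝ) : Finset E :=
  Finset.univ.filter (fun e => T e < H)

open Classical in
/-- The strategy `ḡ`: route proportionally to the capacities of the active edges, and
proportionally to all capacities if no edge is active. -/
noncomputable def gbar {E : Type} [Fintype E] (ν : E → ℝ) (H : ℝ)
    (T : E → ℝ) (e : E) : ℝ :=
  if e ∈ activeEdges H T then ν e / ∑ e' ∈ activeEdges H T, ν e'
  else if (activeEdges H T).Nonempty then 0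
  else ν e / ∑ e', ν e'

/-- A function of an information state `(θ, T)` is right-Lipschitz if around every point
it is Lipschitz with respect to coordinate-wise nonnegative small perturbations. -/
def RightLipschitz {E : Type} [Fintype E] (g : ℝ → (E → ℝ) → ℝ) : Prop :=
  ∀ (θ : ℝ) (T : E → ℝ), ∃ L > (0:ℝ), ∃ ε > (0:ℝ), ∀ (δ : ℝ) (x : E → ℝ),
    δ ∈ Set.Icc (0:ℝ) ε → (∀ e, x e ∈ Set.Icc (0:ℝ) ε) →
    |g θ T - g (θ + δ) (fun e => T e + x e)| ≤ L * ‖(δ, x)‖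

/-- An admissible strategy with information on exit times: a right-Lipschitz function
`g : [0, H) × ℝ≥0^E → [0, 1]^E` whose components sum to `1`. -/
def Admissible {E : Type} [Fintype E] (g : ℝ → (E → ℝ) → E → ℝ) : Prop :=
  (∀ e, RightLipschitz (fun θ T => g θ T e)) ∧
  (∀ θ T e, g θ T e ∈ Set.Icc (0:ℝ) 1) ∧
  (∀ θ T, ∑ e, g θ T e = 1)

/-- The feasible flow over time induced by a strategy profile `G` with information on
exit times: player `j` sends flow into edge `e` at rate
`f⁺_{e,j}(θ) = d_j · g_{e,j}(θ, T(θ))` where `T(θ)` is the current exit-time vector. -/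
def FlowOverTime.InducedBy {E P : Type} [Fintype E] [Fintype P]
    {τ ν : E → ℝ} {d : P → ℝ} {H : ℝ}
    (f : FlowOverTime E P τ ν d H) (G : P → ℝ → (E → ℝ) → E → ℝ) : Prop :=
  f.Feasible ∧ ∀ e j θ, θ ∈ Set.Ico (0:ℝ) H →
    f.fin e j θ = d j * G j θ (fun e' => f.exitTime e' θ) e

/-!
For every `α ∈ [0, H]`, a feasible flow over time delivers at most
`D α + ∑ₑ νₑ (H - α - τₑ)⁺`, where `D = ∑ⱼ dⱼ`: the flow that has entered by time `α`, plus
what each edge can still push out at capacity before `H`. Exit times are monotone, so under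
`ḡ` the set of active edges only shrinks. Let `α*` be the first time their total capacity
drops below `D`. Before `α*`, `ḡ` sends at most `νₑ` into every edge, so no queue forms, and
it sends nothing into an edge whose exit time has reached `H`, so all flow sent before `α*`
arrives in time. After `α*` the active edges are oversubscribed, so every edge runs at
capacity until `H`. Hence `ḡ` attains the cut bound at `α*`, which bounds `Opt` from above.
-/

open Set

theorem nonpos_of_nonincreasing_while_pos {g : ℝ → ℝ} {a b : ℝ} (hab : a ≤ b)
    (hg : ContinuousOn g (Icc a b)) (ha : g a ≤ 0)
    (hdec : ∀ s ∈ Ico a b, ∀ t ∈ Ioc s b, (∀ u ∈ Ioc s t, 0 < g u) → g t ≤ g s) :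
    g b ≤ 0 := by
  by_contra! hb
  set S := Icc a b ∩ g ⁻¹' Iic 0
  have hSbdd : BddAbove S := ⟨b, fun u hu => hu.1.2⟩
  have hs : sSup S ∈ S :=
    (hg.preimage_isClosed_of_isClosed isClosed_Icc isClosed_Iic).csSup_mem
      ⟨a, ⟨le_rfl, hab⟩, ha⟩ hSbdd
  have hsb : sSup S < b := hs.1.2.lt_of_ne fun h => (h ▸ hs.2 : g b ≤ 0).not_gt hb
  have hpos : ∀ u ∈ Ioc (sSup S) b, 0 < g u := fun u hu => by
    by_contra! hgu
    exact hu.1.not_ge (le_csSup hSbdd ⟨⟨hs.1.1.trans hu.1.le, hu.2⟩, hgu⟩)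
  have hgs : g (sSup S) ≤ 0 := hs.2
  linarith [hdec _ ⟨hs.1.1, hsb⟩ b ⟨hsb, le_rfl⟩ hpos]

section Strategy

variable {E : Type} [Fintype E] {ν : E → ℝ} {H D : ℝ} {T : E → ℝ} {e : E}

theorem mem_activeEdges : e ∈ activeEdges H T ↔ T e < H := by
  simp [activeEdges]

theorem mul_gbar_of_notMem (hD : 0 ≤ D) (hcap : D ≤ ∑ e' ∈ activeEdges H T, ν e')
    (he : e ∉ activeEdges H T) : D * gbar ν H T e = 0 := by
  rw [gbar, if_neg he]
  split_ifs with hne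
  · exact mul_zero D
  · rw [Finset.not_nonempty_iff_eq_empty.1 hne, Finset.sum_empty] at hcap
    rw [le_antisymm hcap hD, zero_mul]

theorem mul_gbar_le (hν : 0 ≤ ν e) (hD : 0 ≤ D) (hcap : D ≤ ∑ e' ∈ activeEdges H T, ν e') :
    D * gbar ν H T e ≤ ν e := by
  by_cases he : e ∈ activeEdges H T
  · rw [gbar, if_pos he, mul_div_left_comm]
    exact mul_le_of_le_one_right hν (div_le_one_of_le₀ hcap (hD.trans hcap))
  · rw [mul_gbar_of_notMem hD hcap he]
    exact hν

theorem le_mul_gbar (hν : ∀ e, 0 < ν e) (he : e ∈ activeEdges H T)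
    (hcap : ∑ e' ∈ activeEdges H T, ν e' ≤ D) : ν e ≤ D * gbar ν H T e := by
  have hS : 0 < ∑ e' ∈ activeEdges H T, ν e' :=
    (hν e).trans_le (Finset.single_le_sum (fun e' _ => (hν e').le) he)
  rw [gbar, if_pos he, mul_div_left_comm, le_mul_iff_one_le_right (hν e), one_le_div hS]
  exact hcap

end Strategy

/-- The cut bound at time `α`: at most `D * α` enters the network before `α`, and flow entering
edge `e` after `α` arrives by `H` at rate at most `ν e` during a window of length
`(H - α - τ e)⁺`. -/
noncomputable def cutCapacity {E : Type} [Fintype E] (τ ν : E → ℝ) (D H α : ℝ) : ℝ :=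
  D * α + ∑ e, ν e * max (H - α - τ e) 0

namespace FlowOverTime

section General

variable {E P : Type} [Fintype E] [Fintype P] {τ ν : E → ℝ} {d : P → ℝ} {H : ℝ}
variable (f : FlowOverTime E P τ ν d H) {e : E}

noncomputable def inflow (e : E) (θ : ℝ) : ℝ := ∑ j, f.fin e j θ

noncomputable def outflow (e : E) (θ : ℝ) : ℝ := ∑ j, f.fout e j θ

noncomputable def cumInflow (e : E) (θ : ℝ) : ℝ := ∫ t in (0:ℝ)..θ, f.inflow e t

noncomputable def cumOutflow (e : E) (θ : ℝ) : ℝ := ∫ t in (0:ℝ)..θ, f.outflow e t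

theorem outflow_nonneg (e : E) (t : ℝ) : 0 ≤ f.outflow e t :=
  Finset.sum_nonneg fun j _ => f.fout_nonneg e j t

theorem integrable_inflow (e : E) : Integrable (f.inflow e) :=
  integrable_finsetSum _ fun j _ => f.fin_integrable e j

theorem integrable_outflow (e : E) : Integrable (f.outflow e) :=
  integrable_finsetSum _ fun j _ => f.fout_integrable e j

theorem cumInflow_eq_sum_Fplus (e : E) (θ : ℝ) : f.cumInflow e θ = ∑ j, f.Fplus e j θ :=
  intervalIntegral.integral_finsetSum fun j _ => (f.fin_integrable e j).intervalIntegrable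

theorem cumOutflow_eq_sum_Fminus (e : E) (θ : ℝ) : f.cumOutflow e θ = ∑ j, f.Fminus e j θ :=
  intervalIntegral.integral_finsetSum fun j _ => (f.fout_integrable e j).intervalIntegrable

theorem queue_eq (e : E) (θ : ℝ) : f.queue e θ = f.cumInflow e θ - f.cumOutflow e (θ + τ e) := by
  rw [queue, cumInflow_eq_sum_Fplus, cumOutflow_eq_sum_Fminus]

theorem cumInflow_eq_add (e : E) (x y : ℝ) :
    f.cumInflow e y = f.cumInflow e x + ∫ t in x..y, f.inflow e t :=
  (intervalIntegral.integral_add_adjacent_intervals (f.integrable_inflow e).intervalIntegrable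
    (f.integrable_inflow e).intervalIntegrable).symm

theorem cumOutflow_eq_add (e : E) (x y : ℝ) :
    f.cumOutflow e y = f.cumOutflow e x + ∫ t in x..y, f.outflow e t :=
  (intervalIntegral.integral_add_adjacent_intervals (f.integrable_outflow e).intervalIntegrable
    (f.integrable_outflow e).intervalIntegrable).symm

theorem cumInflow_mono (e : E) : Monotone (f.cumInflow e) := fun x y hxy => by
  rw [f.cumInflow_eq_add e x y]
  exact le_add_of_nonneg_right (intervalIntegral.integral_nonneg hxy fun t _ =>
    Finset.sum_nonneg fun j _ => f.fin_nonneg e j t)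

theorem cumOutflow_mono (e : E) : Monotone (f.cumOutflow e) := fun x y hxy => by
  rw [f.cumOutflow_eq_add e x y]
  exact le_add_of_nonneg_right (intervalIntegral.integral_nonneg hxy fun t _ =>
    f.outflow_nonneg e t)

theorem cumInflow_zero (e : E) : f.cumInflow e 0 = 0 :=
  intervalIntegral.integral_same

theorem cumOutflow_nonneg (e : E) {x : ℝ} (hx : 0 ≤ x) : 0 ≤ f.cumOutflow e x :=
  intervalIntegral.integral_same.symm.trans_le (f.cumOutflow_mono e hx)

theorem cumOutflow_transitTime (hτ : 0 ≤ τ e) : f.cumOutflow e (τ e) = 0 := by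
  have h : EqOn (f.outflow e) (fun _ => 0) (Ioo 0 (τ e)) := fun t ht =>
    Finset.sum_eq_zero fun j _ => f.fout_supp e j t fun h => ht.2.not_ge h.1
  rw [cumOutflow, intervalIntegral.integral_congr_Ioo_of_le hτ h, intervalIntegral.integral_zero]

theorem cumOutflow_eq_of_horizon_le {x : ℝ} (hx : H ≤ x) :
    f.cumOutflow e x = f.cumOutflow e H := by
  have h : EqOn (f.outflow e) (fun _ => 0) (Ioo H x) := fun t ht =>
    Finset.sum_eq_zero fun j _ => f.fout_supp e j t fun h => ht.1.not_gt h.2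
  rw [f.cumOutflow_eq_add e H x, intervalIntegral.integral_congr_Ioo_of_le hx h,
    intervalIntegral.integral_zero, add_zero]

theorem queue_zero (hτ : 0 ≤ τ e) : f.queue e 0 = 0 := by
  rw [queue_eq, zero_add, cumInflow_zero, f.cumOutflow_transitTime hτ, sub_zero]

theorem continuous_cumInflow (e : E) : Continuous (f.cumInflow e) :=
  intervalIntegral.continuous_primitive (fun _ _ => (f.integrable_inflow e).intervalIntegrable) 0

theorem continuous_cumOutflow (e : E) : Continuous (f.cumOutflow e) :=
  intervalIntegral.continuous_primitive (fun _ _ => (f.integrable_outflow e).intervalIntegrable) 0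

theorem continuous_queue (e : E) : Continuous (f.queue e) := by
  have := f.continuous_cumInflow e
  have := f.continuous_cumOutflow e
  simp_rw [funext (f.queue_eq e)]
  fun_prop

theorem continuous_exitTime (e : E) : Continuous (f.exitTime e) := by
  unfold exitTime
  have := f.continuous_queue e
  fun_prop

theorem outflow_le_capacity (hfeas : f.Feasible) (hν : 0 ≤ ν e) (t : ℝ) :
    f.outflow e t ≤ ν e := by
  by_cases ht : t ∈ Ico (τ e) H
  · have h := hfeas.2.1 e (t - τ e) ⟨by linarith [ht.1], by linarith [ht.2]⟩
    rw [sub_add_cancel] at h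
    rw [outflow, h]
    split_ifs
    exacts [le_rfl, min_le_right _ _]
  · rw [outflow, Finset.sum_eq_zero fun j _ => f.fout_supp e j t ht]
    exact hν

theorem outflow_eq_capacity (hfeas : f.Feasible) {u : ℝ} (hu : u ∈ Ico 0 (H - τ e))
    (h : 0 < f.queue e u ∨ ν e ≤ f.inflow e u) : f.outflow e (u + τ e) = ν e := by
  rw [outflow, hfeas.2.1 e u hu]
  split_ifs with hq
  · rfl
  · exact min_eq_right (h.resolve_left hq)

theorem cumOutflow_le_add (hfeas : f.Feasible) (hν : 0 ≤ ν e) {x y : ℝ} (hxy : x ≤ y) :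
    f.cumOutflow e y ≤ f.cumOutflow e x + ν e * (y - x) := by
  rw [f.cumOutflow_eq_add e x y, mul_comm]
  gcongr
  simpa using intervalIntegral.integral_mono_on hxy (f.integrable_outflow e).intervalIntegrable
    intervalIntegrable_const fun t _ => f.outflow_le_capacity hfeas hν t

theorem cumOutflow_eq_add_of_eq_capacity {x y : ℝ} (hxy : x ≤ y)
    (h : ∀ t ∈ Ioo x y, f.outflow e t = ν e) :
    f.cumOutflow e y = f.cumOutflow e x + ν e * (y - x) := by
  rw [f.cumOutflow_eq_add e x y,
    intervalIntegral.integral_congr_Ioo_of_le hxy (g := fun _ => ν e) h,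
    intervalIntegral.integral_const, smul_eq_mul, mul_comm]

theorem queue_nonneg (hfeas : f.Feasible) (hτ : 0 ≤ τ e) {θ : ℝ} (hθ : 0 ≤ θ) :
    0 ≤ f.queue e θ := by
  have hcore : ∀ u ∈ Ico 0 (H - τ e), f.cumOutflow e (u + τ e) ≤ f.cumInflow e u :=
    fun u hu => by
      rw [cumInflow_eq_sum_Fplus, cumOutflow_eq_sum_Fminus]
      exact Finset.sum_le_sum fun j _ => hfeas.1 e j u hu
  rw [queue_eq, sub_nonneg]
  rcases lt_or_ge θ (H - τ e) with hθH | hθH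
  · exact hcore θ ⟨hθ, hθH⟩
  -- after time `H - τ e` the cumulative outflow is frozen
  obtain ⟨u₀, hu₀θ, hu₀H, hu₀⟩ : ∃ u₀ ≤ θ, H ≤ u₀ + τ e ∧
      f.cumOutflow e (u₀ + τ e) ≤ f.cumInflow e u₀ := by
    rcases le_or_gt (H - τ e) 0 with h | h
    · refine ⟨0, hθ, by linarith, ?_⟩
      rw [zero_add, f.cumOutflow_transitTime hτ, cumInflow_zero]
    · refine ⟨H - τ e, hθH, by linarith, ?_⟩
      have := f.continuous_cumOutflow e
      refine le_on_closure hcore (by fun_prop) (f.continuous_cumInflow e).continuousOn ?_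
      rw [closure_Ico h.ne]
      exact right_mem_Icc.2 h.le
  calc f.cumOutflow e (θ + τ e) = f.cumOutflow e (u₀ + τ e) := by
        rw [f.cumOutflow_eq_of_horizon_le (by linarith), f.cumOutflow_eq_of_horizon_le hu₀H]
    _ ≤ f.cumInflow e u₀ := hu₀
    _ ≤ f.cumInflow e θ := f.cumInflow_mono e hu₀θ

theorem queue_sub_le (hfeas : f.Feasible) (hν : 0 ≤ ν e) {θ u : ℝ} (hθu : θ ≤ u) :
    f.queue e θ - ν e * (u - θ) ≤ f.queue e u := by
  have hout := f.cumOutflow_le_add hfeas hν (by linarith : θ + τ e ≤ u + τ e)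
  rw [add_sub_add_right_eq_sub] at hout
  rw [queue_eq, queue_eq]
  linarith [f.cumInflow_mono e hθu]

theorem exitTime_mono (hfeas : f.Feasible) (hν : 0 < ν e) : Monotone (f.exitTime e) :=
  fun θ u hθu => by
    have h : f.queue e θ / ν e ≤ f.queue e u / ν e + (u - θ) := by
      rw [div_le_iff₀ hν, add_mul, div_mul_cancel₀ _ hν.ne']
      linarith [f.queue_sub_le hfeas hν.le hθu]
    unfold exitTime
    linarith

theorem cumOutflow_exitTime (hfeas : f.Feasible) (hν : 0 < ν e) (hτ : 0 ≤ τ e) {θ : ℝ}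
    (hθ : 0 ≤ θ) (hT : f.exitTime e θ ≤ H) :
    f.cumOutflow e (f.exitTime e θ) = f.cumInflow e θ := by
  have hT' : f.exitTime e θ = θ + τ e + f.queue e θ / ν e := by
    rw [exitTime]
    ring
  have hcap : ∀ t ∈ Ioo (θ + τ e) (f.exitTime e θ), f.outflow e t = ν e := fun t ht => by
    have hwait : ν e * (t - τ e - θ) < f.queue e θ := by
      rw [← lt_div_iff₀' hν]
      linarith [ht.2]
    have hq := f.queue_sub_le hfeas hν.le (show θ ≤ t - τ e by linarith [ht.1])
    have := f.outflow_eq_capacity hfeas (u := t - τ e)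
      ⟨by linarith [ht.1], by linarith [ht.2]⟩ (Or.inl (by linarith))
    rwa [sub_add_cancel] at this
  rw [f.cumOutflow_eq_add_of_eq_capacity
      (hT' ▸ le_add_of_nonneg_right (div_nonneg (f.queue_nonneg hfeas hτ hθ) hν.le)) hcap,
    hT', add_sub_cancel_left, mul_div_cancel₀ _ hν.ne', queue_eq]
  ring

theorem queue_eq_zero_of_inflow_le (hfeas : f.Feasible) (hτ : 0 ≤ τ e) {θ : ℝ} (hθ0 : 0 ≤ θ)
    (hθ : θ < H - τ e) (h : ∀ u ∈ Ico 0 θ, f.inflow e u ≤ ν e) : f.queue e θ = 0 := by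
  refine le_antisymm ?_ (f.queue_nonneg hfeas hτ hθ0)
  refine nonpos_of_nonincreasing_while_pos hθ0 (f.continuous_queue e).continuousOn
    (f.queue_zero hτ).le fun s hs t ht hpos => ?_
  have hout : f.cumOutflow e (t + τ e) = f.cumOutflow e (s + τ e) + ν e * (t - s) := by
    rw [f.cumOutflow_eq_add_of_eq_capacity (x := s + τ e) (y := t + τ e)
      (by linarith [ht.1]) fun x hx => ?_, add_sub_add_right_eq_sub]
    have := f.outflow_eq_capacity hfeas (u := x - τ e)
      ⟨by linarith [hs.1, hx.1], by linarith [hx.2, ht.2]⟩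
      (Or.inl (hpos _ ⟨by linarith [hx.1], by linarith [hx.2]⟩))
    rwa [sub_add_cancel] at this
  have hin : f.cumInflow e t ≤ f.cumInflow e s + ν e * (t - s) := by
    rw [f.cumInflow_eq_add e s t, mul_comm]
    gcongr
    simpa using intervalIntegral.integral_mono_on_of_le_Ioo ht.1.le
      (f.integrable_inflow e).intervalIntegrable intervalIntegrable_const
      fun u hu => h u ⟨hs.1.trans hu.1.le, hu.2.trans_le ht.2⟩
  rw [queue_eq, queue_eq]
  linarith

theorem cumInflow_le_cumOutflow_of_inflow_eq_zero (hfeas : f.Feasible) (hν : 0 < ν e)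
    (hτ : 0 ≤ τ e) (hH : 0 ≤ H) {α : ℝ} (hα : 0 ≤ α)
    (h : ∀ u ∈ Ioo 0 α, H ≤ f.exitTime e u → f.inflow e u = 0) :
    f.cumInflow e α ≤ f.cumOutflow e H := by
  have hmono := f.exitTime_mono hfeas hν
  have hidle : ∀ σ ∈ Icc 0 α, (∀ u ∈ Ioo σ α, H ≤ f.exitTime e u) →
      f.cumInflow e α = f.cumInflow e σ := fun σ hσ hT => by
    rw [f.cumInflow_eq_add e σ α, intervalIntegral.integral_congr_Ioo_of_le hσ.2 (g := fun _ => 0)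
      fun u hu => h u ⟨hσ.1.trans_lt hu.1, hu.2⟩ (hT u hu)]
    rw [intervalIntegral.integral_zero, add_zero]
  rcases le_or_gt H (f.exitTime e 0) with h0 | h0
  · rw [hidle 0 ⟨le_rfl, hα⟩ fun u hu => h0.trans (hmono hu.1.le), cumInflow_zero]
    exact f.cumOutflow_nonneg e hH
  rcases le_or_gt (f.exitTime e α) H with hTα | hTα
  · rw [← f.cumOutflow_exitTime hfeas hν hτ hα hTα]
    exact f.cumOutflow_mono e hTα
  obtain ⟨σ, hσ, hTσ⟩ := intermediate_value_Icc hα (f.continuous_exitTime e).continuousOn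
    ⟨h0.le, hTα.le⟩
  rw [hidle σ hσ fun u hu => hTσ.symm.trans_le (hmono hu.1.le),
    ← f.cumOutflow_exitTime hfeas hν hτ hσ.1 hTσ.le, hTσ]

theorem cumOutflow_horizon_le (hfeas : f.Feasible) (hν : 0 ≤ ν e) (hτ : 0 ≤ τ e) {α : ℝ}
    (hα : 0 ≤ α) : f.cumOutflow e H ≤ f.cumInflow e α + ν e * max (H - α - τ e) 0 := by
  have hq := f.queue_nonneg hfeas hτ hα
  rw [queue_eq] at hq
  rcases le_total (α + τ e) H with h | h
  · rw [max_eq_left (by linarith)]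
    have := f.cumOutflow_le_add hfeas hν h
    rw [sub_add_eq_sub_sub] at this
    linarith
  · rw [max_eq_right (by linarith), mul_zero, add_zero]
    linarith [f.cumOutflow_mono e h]

theorem sum_payoff_eq_sum_cumOutflow : ∑ j, f.payoff j = ∑ e, f.cumOutflow e H := by
  simp_rw [payoff, cumOutflow_eq_sum_Fminus]
  exact Finset.sum_comm

theorem sum_cumInflow {α : ℝ} (hα : α ∈ Icc 0 H) : ∑ e, f.cumInflow e α = (∑ j, d j) * α := by
  have hsupply : ∀ u ∈ Ioo 0 α, ∑ e, f.inflow e u = ∑ j, d j := fun u hu => by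
    simp only [inflow]
    rw [Finset.sum_comm]
    exact Finset.sum_congr rfl fun j _ =>
      f.conservation j u ⟨hu.1.le, hu.2.trans_le hα.2⟩
  simp only [cumInflow]
  rw [← intervalIntegral.integral_finsetSum fun e _ =>
      (f.integrable_inflow e).intervalIntegrable,
    intervalIntegral.integral_congr_Ioo_of_le hα.1 (g := fun _ => ∑ j, d j) hsupply,
    intervalIntegral.integral_const, smul_eq_mul, sub_zero, mul_comm]

theorem sum_payoff_le_cutCapacity (hfeas : f.Feasible) (hν : ∀ e, 0 ≤ ν e)
    (hτ : ∀ e, 0 ≤ τ e) {α : ℝ} (hα : α ∈ Icc 0 H) :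
    ∑ j, f.payoff j ≤ cutCapacity τ ν (∑ j, d j) H α := by
  rw [sum_payoff_eq_sum_cumOutflow, cutCapacity, ← f.sum_cumInflow hα, ← Finset.sum_add_distrib]
  exact Finset.sum_le_sum fun e _ => f.cumOutflow_horizon_le hfeas (hν e) (hτ e) hα.1

end General

section Gbar

variable {E P : Type} [Fintype E] [Fintype P] {τ ν : E → ℝ} {d : P → ℝ} {H : ℝ}
variable (f : FlowOverTime E P τ ν d H) {e : E}

noncomputable def activeCapacity (θ : ℝ) : ℝ :=
  ∑ e ∈ activeEdges H (fun e' => f.exitTime e' θ), ν e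

/-- The first time at which the active edges can no longer absorb the total supply rate
(`H` if this never happens). -/
noncomputable def criticalTime : ℝ :=
  sInf (insert H {θ ∈ Icc 0 H | f.activeCapacity θ < ∑ j, d j})

theorem activeCapacity_antitone (hfeas : f.Feasible) (hν : ∀ e, 0 < ν e) :
    Antitone f.activeCapacity := fun θ u hθu =>
  Finset.sum_le_sum_of_subset_of_nonneg
    (fun e he => by
      rw [mem_activeEdges] at he ⊢
      exact (f.exitTime_mono hfeas (hν e) hθu).trans_lt he)
    fun e _ _ => (hν e).le

theorem zero_mem_lowerBounds_criticalTime (hH : 0 ≤ H) :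
    0 ∈ lowerBounds (insert H {θ ∈ Icc 0 H | f.activeCapacity θ < ∑ j, d j}) := by
  rintro x (rfl | hx)
  exacts [hH, hx.1.1]

theorem criticalTime_mem_Icc (hH : 0 ≤ H) : f.criticalTime ∈ Icc 0 H :=
  ⟨le_csInf ⟨H, mem_insert _ _⟩ (f.zero_mem_lowerBounds_criticalTime hH),
    csInf_le ⟨0, f.zero_mem_lowerBounds_criticalTime hH⟩ (mem_insert _ _)⟩

theorem le_activeCapacity_of_lt_criticalTime (hH : 0 ≤ H) {u : ℝ} (hu0 : 0 ≤ u)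
    (hu : u < f.criticalTime) : ∑ j, d j ≤ f.activeCapacity u := by
  by_contra! hlt
  exact hu.not_ge (csInf_le ⟨0, f.zero_mem_lowerBounds_criticalTime hH⟩
    (mem_insert_of_mem _ ⟨⟨hu0, hu.le.trans (f.criticalTime_mem_Icc hH).2⟩, hlt⟩))

theorem activeCapacity_lt_of_criticalTime_lt (hfeas : f.Feasible) (hν : ∀ e, 0 < ν e)
    (hH : 0 ≤ H) {u : ℝ} (hu : f.criticalTime < u) (huH : u < H) :
    f.activeCapacity u < ∑ j, d j := by
  obtain ⟨b, hb, hbu⟩ :=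
    (csInf_lt_iff ⟨0, f.zero_mem_lowerBounds_criticalTime hH⟩ ⟨H, mem_insert _ _⟩).1 hu
  rcases hb with rfl | hb
  · exact absurd huH hbu.not_gt
  · exact (f.activeCapacity_antitone hfeas hν hbu.le).trans_lt hb.2

variable {f}

theorem inflow_eq_mul_gbar (hind : f.InducedBy fun _ _ T e => gbar ν H T e) {θ : ℝ}
    (hθ : θ ∈ Ico 0 H) :
    f.inflow e θ = (∑ j, d j) * gbar ν H (fun e' => f.exitTime e' θ) e := by
  rw [inflow, Finset.sum_mul]
  exact Finset.sum_congr rfl fun j _ => hind.2 e j θ hθ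

theorem outflow_eq_capacity_of_criticalTime_lt (hind : f.InducedBy fun _ _ T e => gbar ν H T e)
    (hν : ∀ e, 0 < ν e) (hτ : 0 ≤ τ e) (hH : 0 ≤ H) {t : ℝ}
    (ht : t ∈ Ioo (f.criticalTime + τ e) H) : f.outflow e t = ν e := by
  have hα := f.criticalTime_mem_Icc hH
  have hu0 : 0 ≤ t - τ e := by linarith [hα.1, ht.1]
  have huH : t - τ e < H := by linarith [ht.2]
  have := f.outflow_eq_capacity hind.1 (u := t - τ e) ⟨hu0, by linarith [ht.2]⟩ ?_
  · rwa [sub_add_cancel] at this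
  rcases (f.queue_nonneg hind.1 hτ hu0).lt_or_eq with hq | hq
  · exact Or.inl hq
  -- with an empty queue `e` is active, and after the critical time the active edges are
  -- oversubscribed
  have hactive : f.exitTime e (t - τ e) < H := by
    rw [exitTime, ← hq, zero_div, add_zero, sub_add_cancel]
    exact ht.2
  rw [inflow_eq_mul_gbar hind ⟨hu0, huH⟩]
  exact Or.inr (le_mul_gbar hν (mem_activeEdges.2 hactive)
    (f.activeCapacity_lt_of_criticalTime_lt hind.1 hν hH (by linarith [ht.1]) huH).le)

theorem cumOutflow_horizon_of_criticalTime_lt (hind : f.InducedBy fun _ _ T e => gbar ν H T e)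
    (hν : ∀ e, 0 < ν e) (hτ : 0 ≤ τ e) (hH : 0 ≤ H) (hd : 0 ≤ ∑ j, d j)
    (he : f.criticalTime < H - τ e) :
    f.cumOutflow e H = f.cumInflow e f.criticalTime + ν e * (H - f.criticalTime - τ e) := by
  have hα := f.criticalTime_mem_Icc hH
  have hq : f.queue e f.criticalTime = 0 :=
    f.queue_eq_zero_of_inflow_le hind.1 hτ hα.1 he fun u hu => by
      rw [inflow_eq_mul_gbar hind ⟨hu.1, hu.2.trans_le hα.2⟩]
      exact mul_gbar_le (hν e).le hd (f.le_activeCapacity_of_lt_criticalTime hH hu.1 hu.2)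
  rw [queue_eq, sub_eq_zero] at hq
  rw [f.cumOutflow_eq_add_of_eq_capacity (x := f.criticalTime + τ e) (by linarith)
    fun t ht => outflow_eq_capacity_of_criticalTime_lt hind hν hτ hH ht, hq]
  ring

theorem cumInflow_criticalTime_le_cumOutflow (hind : f.InducedBy fun _ _ T e => gbar ν H T e)
    (hν : 0 < ν e) (hτ : 0 ≤ τ e) (hH : 0 ≤ H) (hd : 0 ≤ ∑ j, d j) :
    f.cumInflow e f.criticalTime ≤ f.cumOutflow e H := by
  have hα := f.criticalTime_mem_Icc hH
  refine f.cumInflow_le_cumOutflow_of_inflow_eq_zero hind.1 hν hτ hH hα.1 fun u hu hT => ?_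
  rw [inflow_eq_mul_gbar hind ⟨hu.1.le, hu.2.trans_le hα.2⟩]
  exact mul_gbar_of_notMem hd (f.le_activeCapacity_of_lt_criticalTime hH hu.1.le hu.2)
    fun h => (mem_activeEdges.1 h).not_ge hT

theorem cutCapacity_criticalTime_le_sum_payoff
    (hind : f.InducedBy fun _ _ T e => gbar ν H T e) (hν : ∀ e, 0 < ν e) (hτ : ∀ e, 0 ≤ τ e)
    (hH : 0 ≤ H) (hd : 0 ≤ ∑ j, d j) :
    cutCapacity τ ν (∑ j, d j) H f.criticalTime ≤ ∑ j, f.payoff j := by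
  rw [sum_payoff_eq_sum_cumOutflow, cutCapacity,
    ← f.sum_cumInflow (f.criticalTime_mem_Icc hH), ← Finset.sum_add_distrib]
  refine Finset.sum_le_sum fun e _ => ?_
  rcases lt_or_ge f.criticalTime (H - τ e) with he | he
  · rw [max_eq_left (by linarith),
      cumOutflow_horizon_of_criticalTime_lt hind hν (hτ e) hH hd he]
  · rw [max_eq_right (by linarith), mul_zero, add_zero]
    exact cumInflow_criticalTime_le_cumOutflow hind (hν e) (hτ e) hH hd

end Gbar

end FlowOverTime

theorem gbar_total_payoff_eq_opt_general
    {E P : Type} [Fintype E] [Fintype P]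
    (τ ν : E → ℝ) (d : P → ℝ) (H : ℝ)
    (hτ : ∀ e, 0 < τ e) (hν : ∀ e, 0 < ν e) (hd : ∀ j, 0 < d j) (hH : 0 < H)
    (Opt : ℝ)
    (hOpt : IsGreatest {v : ℝ | ∃ f : FlowOverTime E P τ ν d H,
        f.Feasible ∧ ∑ j, f.payoff j = v} Opt)
    (f : FlowOverTime E P τ ν d H)
    (hf : f.InducedBy (fun _ θ T e => gbar ν H T e)) :
    ∑ j, f.payoff j = Opt := by
  obtain ⟨g, hg, hgOpt⟩ := hOpt.1
  have hτ' : ∀ e, 0 ≤ τ e := fun e => (hτ e).le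
  have hD : 0 ≤ ∑ j, d j := Finset.sum_nonneg fun j _ => (hd j).le
  refine le_antisymm (hOpt.2 ⟨f, hf.1, rfl⟩) ?_
  calc Opt = ∑ j, g.payoff j := hgOpt.symm
    _ ≤ cutCapacity τ ν (∑ j, d j) H f.criticalTime :=
      g.sum_payoff_le_cutCapacity hg (fun e => (hν e).le) hτ' (f.criticalTime_mem_Icc hH.le)
    _ ≤ ∑ j, f.payoff j := f.cutCapacity_criticalTime_le_sum_payoff hf hν hτ' hH.le hD

/-- On a parallel-edge network where the players receive the current
time and exit times as information, if every player uses the strategy `ḡ` (routing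
proportionally to the capacities of the active edges), then in the induced feasible flow
over time the total payoff equals the system optimum `Opt`, the value of a maximum flow
over time. -/
theorem gbar_total_payoff_eq_opt
    {E P : Type} [Fintype E] [Fintype P] [Nonempty E]
    (τ ν : E → ℝ) (d : P → ℝ) (H : ℝ)
    (hτ : ∀ e, 0 < τ e) (hν : ∀ e, 0 < ν e) (hd : ∀ j, 0 < d j) (hH : 0 < H)
    (Opt : ℝ)
    (hOpt : IsGreatest {v : ℝ | ∃ f : FlowOverTime E P τ ν d H,
        f.Feasible ∧ ∑ j, f.payoff j = v} Opt)
    (f : FlowOverTime E P τ ν d H)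
    (hf : f.InducedBy (fun _ θ T e => gbar ν H T e)) :
    ∑ j, f.payoff j = Opt :=
  gbar_total_payoff_eq_opt_general τ ν d H hτ hν hd hH Opt hOpt f hf
end
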